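/- Let f : ℝᵈ → ℝ and V : ℝᵈ → ℝᵈ be continuously differentiable with V bounded with bounded derivative, and let Ω ⊆ ℝᵈ be a bounded measurable set. For t near 0 set Ω_t := (I + tV)(Ω). Then t ↦ ∫_{Ω_t} f dx is differentiable at t = 0 with derivative ∫_Ω (∇f · V + f · div V) dx = ∫_Ω div(f V) dx. -/

import Mathlib

/-!
For small `t` the map `y ↦ y + t • V y` is a Lipschitz perturbation of the identity with constant
`< 1` on a neighbourhood of `Ω`, hence injective there, and its Jacobian `1 + t • DV` has positive
determinant; the change of variables formula turns `∫_{Ω_t} f` into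
`∫_Ω det (1 + t • DV x) * f (x + t • V x)`. This integrand is `H (t, DV x, V x, x)` for a single
`C¹` function `H`, so it is Lipschitz in `t` uniformly over the compact set of parameters coming
from `closure Ω`, which justifies differentiating under the integral sign. At `t = 0` the
derivative of `det (1 + t • A)` is `trace A`.
-/

open MeasureTheory Set Metric Filter Topology
open scoped NNReal

theorem LocallyLipschitz.exists_forall_lipschitzOnWith_left {α β γ : Type*}
    [PseudoMetricSpace α] [PseudoMetricSpace β] [PseudoMetricSpace γ] {H : α × β → γ}
    (hH : LocallyLipschitz H) {s : Set α} (hs : IsCompact s) {P : Set β} (hP : IsCompact P) :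
    ∃ L, ∀ p ∈ P, LipschitzOnWith L (fun t => H (t, p)) s := by
  obtain ⟨L, hL⟩ := hH.locallyLipschitzOn.exists_lipschitzOnWith_of_compact (hs.prod hP)
  refine ⟨L, fun p hp => ?_⟩
  simpa [Function.comp_def] using
    hL.comp (LipschitzWith.prodMk_right p).lipschitzOnWith fun t ht => ⟨ht, hp⟩

section

variable {E : Type*} [NormedAddCommGroup E] [NormedSpace ℝ E]

theorem injOn_add_smul_of_lipschitzOnWith {V : E → E} {K : ℝ≥0} {s : Set E}
    (hV : LipschitzOnWith K V s) {t : ℝ} (ht : ‖t‖₊ * K < 1) :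
    InjOn (fun y => y + t • V y) s := by
  rw [injOn_iff_injective]
  exact ((AntilipschitzWith.subtype_coe s).add_lipschitzWith
    ((lipschitzWith_smul t).comp hV.to_restrict) (by simpa using ht)).injective

namespace ContinuousLinearMap

variable [FiniteDimensional ℝ E]

theorem contDiff_det {n : WithTop ℕ∞} : ContDiff ℝ n fun A : E →L[ℝ] E => A.det := by
  let b := Module.finBasis ℝ E
  have h : (fun A : E →L[ℝ] E => A.det) = fun A => ∑ σ : Equiv.Perm (Fin (Module.finrank ℝ E)),
      (Equiv.Perm.sign σ : ℝ) * ∏ i, b.repr (A (b i)) (σ i) := by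
    ext A
    rw [ContinuousLinearMap.det, ← LinearMap.det_toMatrix b, Matrix.det_apply']
    simp [LinearMap.toMatrix_apply]
  rw [h]
  refine ContDiff.sum fun σ _ => contDiff_const.mul (contDiff_prod fun i _ => ?_)
  exact ((b.coord (σ i)).toContinuousLinearMap.comp (ContinuousLinearMap.apply ℝ E (b i))).contDiff

theorem hasDerivAt_det_one_add_smul (A : E →L[ℝ] E) :
    HasDerivAt (fun t : ℝ => (1 + t • A).det) (LinearMap.trace ℝ E A) 0 := by
  let b := Module.finBasis ℝ E
  set M := LinearMap.toMatrix b b A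
  set p := (1 + (Polynomial.X : Polynomial ℝ) • M.map Polynomial.C).det.divX.divX
  have hp : ∀ t : ℝ, (1 + t • A).det = 1 + LinearMap.trace ℝ E A * t + p.eval t * t ^ 2 := by
    intro t
    rw [ContinuousLinearMap.det, ← LinearMap.det_toMatrix b, LinearMap.trace_eq_matrix_trace ℝ b]
    simp only [toLinearMap_add, toLinearMap_one, toLinearMap_smul, map_add, map_smul,
      LinearMap.toMatrix_one]
    exact Matrix.det_one_add_smul t M
  simp_rw [hp]
  refine ((((hasDerivAt_id' 0).const_mul (LinearMap.trace ℝ E A)).const_add 1).add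
    ((p.hasDerivAt 0).mul (hasDerivAt_pow 2 (0 : ℝ)))).congr_deriv ?_
  simp

-- Along `s ↦ 1 + s • A`, `s ∈ [0, 1]`, every map is invertible (Neumann series), so the
-- determinant cannot change sign.
theorem det_one_add_pos {A : E →L[ℝ] E} (hA : ‖A‖ < 1) : 0 < (1 + A).det := by
  by_contra! h
  have hcont : ContinuousOn (fun s : ℝ => (1 + s • A).det) (Icc 0 1) :=
    (continuous_det.comp (continuous_const.add (continuous_id.smul continuous_const))).continuousOn
  obtain ⟨s, hs, hs0⟩ :=
    intermediate_value_Icc' zero_le_one hcont ⟨by simpa using h, by simp [ContinuousLinearMap.det]⟩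
  have hsA : ‖-(s • A)‖ < 1 := by
    rw [norm_neg, norm_smul, Real.norm_of_nonneg hs.1]
    exact (mul_le_of_le_one_left (norm_nonneg _) hs.2).trans_lt hA
  have hunit : IsUnit (1 + s • A) := by simpa using isUnit_one_sub_of_norm_lt_one hsA
  exact ((LinearMap.isUnit_iff_isUnit_det _).1 (hunit.map toLinearMapRingHom)).ne_zero hs0

end ContinuousLinearMap

variable [FiniteDimensional ℝ E]

theorem hasDerivAt_det_one_add_smul_mul {f : E → ℝ} {y : E} (hf : DifferentiableAt ℝ f y)
    (A : E →L[ℝ] E) (v : E) :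
    HasDerivAt (fun t : ℝ => (1 + t • A).det * f (y + t • v))
      (fderiv ℝ f y v + f y * LinearMap.trace ℝ E A) 0 := by
  have hline : HasDerivAt (fun t : ℝ => y + t • v) v 0 := by
    simpa using ((hasDerivAt_id (0 : ℝ)).smul_const v).const_add y
  have hf' : HasFDerivAt f (fderiv ℝ f y) (y + (0 : ℝ) • v) := by simpa using hf.hasFDerivAt
  refine ((ContinuousLinearMap.hasDerivAt_det_one_add_smul A).mul
    (hf'.comp_hasDerivAt 0 hline)).congr_deriv ?_
  simp [ContinuousLinearMap.det]
  ring

variable [MeasurableSpace E] [BorelSpace E] (μ : Measure E) [μ.IsAddHaarMeasure]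

theorem integral_image_add_smul_eq (f : E → ℝ) {V : E → E} (hV : Differentiable ℝ V)
    {K : ℝ≥0} {U : Set E} (hU : IsOpen U) (hVU : LipschitzOnWith K V U) {Ω : Set E}
    (hΩU : Ω ⊆ U) (hΩ : MeasurableSet Ω) {t : ℝ} (ht : ‖t‖₊ * K < 1) :
    ∫ x in (fun y => y + t • V y) '' Ω, f x ∂μ =
      ∫ x in Ω, (1 + t • fderiv ℝ V x).det * f (x + t • V x) ∂μ := by
  have hder : ∀ x ∈ Ω, HasFDerivWithinAt (fun y => y + t • V y) (1 + t • fderiv ℝ V x) Ω x :=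
    fun x _ => ((hasFDerivAt_id x).add ((hV x).hasFDerivAt.const_smul t)).hasFDerivWithinAt
  rw [integral_image_eq_integral_abs_det_fderiv_smul μ hΩ hder
    ((injOn_add_smul_of_lipschitzOnWith hVU ht).mono hΩU)]
  refine setIntegral_congr_fun hΩ fun x hx => ?_
  have hsmall : ‖t • fderiv ℝ V x‖ < 1 := by
    rw [norm_smul]
    calc ‖t‖ * ‖fderiv ℝ V x‖ ≤ ‖t‖ * K :=
          by gcongr; exact norm_fderiv_le_of_lipschitzOn ℝ (hU.mem_nhds (hΩU hx)) hVU
      _ < 1 := by exact_mod_cast ht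
  simp only [smul_eq_mul, abs_of_pos (ContinuousLinearMap.det_one_add_pos hsmall)]

theorem integral_image_add_smul_eventuallyEq (f : E → ℝ) {V : E → E} (hV : ContDiff ℝ 1 V)
    {Ω : Set E} (hΩm : MeasurableSet Ω) (hΩb : Bornology.IsBounded Ω) :
    (fun t : ℝ => ∫ x in (fun y => y + t • V y) '' Ω, f x ∂μ) =ᶠ[𝓝 0]
      fun t => ∫ x in Ω, (1 + t • fderiv ℝ V x).det * f (x + t • V x) ∂μ := by
  obtain ⟨R, hR⟩ := hΩb.subset_closedBall 0
  obtain ⟨K, hK⟩ := hV.contDiffOn.exists_lipschitzOnWith one_ne_zero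
    (convex_closedBall (0 : E) (R + 1)) (isCompact_closedBall _ _)
  have hsmall : ∀ᶠ t in 𝓝 (0 : ℝ), ‖t‖₊ * K < 1 :=
    (continuous_nnnorm.mul continuous_const).continuousAt.eventually_lt continuousAt_const
      (by simp)
  exact hsmall.mono fun t ht => integral_image_add_smul_eq μ f (hV.differentiable one_ne_zero)
    isOpen_ball (hK.mono ball_subset_closedBall)
    (hR.trans (closedBall_subset_ball (lt_add_one R))) hΩm ht

theorem hasDerivAt_integral_image_add_smul {f : E → ℝ} {V : E → E} (hf : ContDiff ℝ 1 f)
    (hV : ContDiff ℝ 1 V) {Ω : Set E} (hΩm : MeasurableSet Ω) (hΩb : Bornology.IsBounded Ω) :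
    HasDerivAt (fun t : ℝ => ∫ x in (fun y => y + t • V y) '' Ω, f x ∂μ)
      (∫ x in Ω, (fderiv ℝ f x (V x) + f x * LinearMap.trace ℝ E (fderiv ℝ V x)) ∂μ) 0 := by
  have hH : ContDiff ℝ 1 fun q : ℝ × (E →L[ℝ] E) × E × E =>
      (1 + q.1 • q.2.1).det * f (q.2.2.2 + q.1 • q.2.2.1) :=
    (ContinuousLinearMap.contDiff_det.comp (by fun_prop)).mul (hf.comp (by fun_prop))
  have hDV : Continuous (fderiv ℝ V) := hV.continuous_fderiv one_ne_zero
  have hg : ∀ t : ℝ, Continuous fun x => (1 + t • fderiv ℝ V x).det * f (x + t • V x) :=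
    fun t => hH.continuous.comp (continuous_const.prodMk (hDV.prodMk (hV.continuous.prodMk
      continuous_id)))
  have htrace : Continuous fun A : E →L[ℝ] E => LinearMap.trace ℝ E A :=
    ((LinearMap.trace ℝ E).comp (ContinuousLinearMap.coeLM ℝ)).continuous_of_finiteDimensional
  have hP : IsCompact ((fun x => (fderiv ℝ V x, V x, x)) '' closure Ω) :=
    hΩb.isCompact_closure.image (hDV.prodMk (hV.continuous.prodMk continuous_id))
  obtain ⟨L, hL⟩ := hH.locallyLipschitz.exists_forall_lipschitzOnWith_left
    (isCompact_closedBall (0 : ℝ) 1) hP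
  refine (hasDerivAt_integral_of_dominated_loc_of_lip (μ := μ.restrict Ω) (bound := fun _ => L)
    (closedBall_mem_nhds 0 one_pos) (.of_forall fun t => (hg t).aestronglyMeasurable)
    (((hg 0).continuousOn.integrableOn_compact hΩb.isCompact_closure).mono_set subset_closure)
    (((hf.continuous_fderiv one_ne_zero).clm_apply hV.continuous).add
      (hf.continuous.mul (htrace.comp hDV))).aestronglyMeasurable
    ((ae_restrict_iff' hΩm).2 (.of_forall fun x hx => ?_))
    (integrableOn_const hΩb.measure_lt_top.ne)
    ((ae_restrict_iff' hΩm).2 (.of_forall fun x _ => hasDerivAt_det_one_add_smul_mul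
      ((hf.differentiable one_ne_zero) x) _ _))).2.congr_of_eventuallyEq
      (integral_image_add_smul_eventuallyEq μ f hV hΩm hΩb)
  simpa using hL _ (mem_image_of_mem _ (subset_closure hx))

end

theorem stmt_17_general {d : ℕ}
    (f : EuclideanSpace ℝ (Fin d) → ℝ)
    (V : EuclideanSpace ℝ (Fin d) → EuclideanSpace ℝ (Fin d))
    (hf : ContDiff ℝ 1 f) (hV : ContDiff ℝ 1 V)
    (Ω : Set (EuclideanSpace ℝ (Fin d)))
    (hΩm : MeasurableSet Ω) (hΩb : Bornology.IsBounded Ω) :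
    HasDerivAt (fun t : ℝ => ∫ x in (fun y => y + t • V y) '' Ω, f x)
      (∫ x in Ω, (fderiv ℝ f x (V x) +
        f x * LinearMap.trace ℝ (EuclideanSpace ℝ (Fin d)) (fderiv ℝ V x))) 0 :=
  hasDerivAt_integral_image_add_smul volume hf hV hΩm hΩb

/-- For f, V continuously differentiable with V bounded with bounded
derivative and Ω bounded measurable, with Ω_t := (I + tV)(Ω), the map
t ↦ ∫_{Ω_t} f dx is differentiable at t = 0 with derivative
∫_Ω (∇f · V + f · div V) dx, where div V = trace(DV). -/
theorem stmt_17 {d : ℕ}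
    (f : EuclideanSpace ℝ (Fin d) → ℝ)
    (V : EuclideanSpace ℝ (Fin d) → EuclideanSpace ℝ (Fin d))
    (hf : ContDiff ℝ 1 f) (hV : ContDiff ℝ 1 V)
    (hVb : ∃ C : ℝ, ∀ x, ‖V x‖ ≤ C ∧ ‖fderiv ℝ V x‖ ≤ C)
    (Ω : Set (EuclideanSpace ℝ (Fin d)))
    (hΩm : MeasurableSet Ω) (hΩb : Bornology.IsBounded Ω) :
    HasDerivAt (fun t : ℝ => ∫ x in (fun y => y + t • V y) '' Ω, f x)
      (∫ x in Ω, (fderiv ℝ f x (V x) +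
        f x * LinearMap.trace ℝ (EuclideanSpace ℝ (Fin d)) (fderiv ℝ V x))) 0 :=
  stmt_17_general f V hf hV Ω hΩm hΩb
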